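/- Let H be a complex Hilbert space, -1 < q < 1, and let F_alg(H) be the algebraic full Fock space over H. Define ℓ(h)* on F_alg(H) by ℓ(h)*(h₁⊗⋯⊗hₙ) = Σ_{k=1}^{n} q^{k-1} ⟨h_k, h⟩ h₁⊗⋯⊗ĥ_k⊗⋯⊗hₙ (ĥ_k means omission), ℓ(h)*Ω = 0, and let r(g) be the right creation operator. Then for every n ≥ 0 and every ξ ∈ H^{⊗n}, [ℓ(h)*, r(g)] ξ = q^n ⟨g, h⟩ ξ, i.e. [ℓ(h)*, r(g)] = ⟨g,h⟩ Σ_{n≥0} q^n P_n where P_n is the projection onto H^{⊗n}. -/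

import Mathlib

/-!
Write `ℓ = ℓ(h)*` and `r = r(g)`. On `h₁ ⊗ ⋯ ⊗ hₙ`, the operator `ℓ r` deletes one factor of
`h₁ ⊗ ⋯ ⊗ hₙ ⊗ g`. Deleting the `k`-th of the first `n` factors commutes with appending `g`
and carries the same weight `q^(k-1) ⟨h_k, h⟩`, so these terms are exactly `r ℓ (h₁ ⊗ ⋯ ⊗ hₙ)`.
Only the deletion of the appended `g` survives, with weight `q^n ⟨g, h⟩`; for `n = 0` this is
the whole of `ℓ r Ω`, while `r ℓ Ω = 0`. Pure tensors span `H^{⊗n}`, so the identity extends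
linearly.
-/

open scoped TensorProduct
open PiTensorProduct

theorem Fin.snoc_comp_castSucc_succAbove {α : Type*} {n : ℕ} (k : Fin (n + 1))
    (f : Fin (n + 1) → α) (x : α) :
    (fun i => (snoc f x : Fin (n + 2) → α) (k.castSucc.succAbove i)) =
      snoc (fun i => f (k.succAbove i)) x := by
  ext i
  cases i using Fin.lastCases with
  | last => simp [succAbove_castSucc_of_le _ _ (le_last k)]
  | cast j => simp [castSucc_succAbove_castSucc]

abbrev FockSpace (𝕜 M : Type*) [CommRing 𝕜] [AddCommGroup M] [Module 𝕜 M] :=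
  DirectSum ℕ fun n => ⨂[𝕜] (_ : Fin n), M

namespace FockSpace

variable {𝕜 M : Type*} [CommRing 𝕜] [AddCommGroup M] [Module 𝕜 M]

structure IsQAnnihilation (q : 𝕜) (φ : M → 𝕜) (A : FockSpace 𝕜 M →ₗ[𝕜] FockSpace 𝕜 M) :
    Prop where
  apply_vacuum :
    A (DirectSum.of (fun n => ⨂[𝕜] (_ : Fin n), M) 0 (tprod 𝕜 (fun i : Fin 0 => i.elim0))) = 0
  apply_tprod : ∀ (n : ℕ) (f : Fin (n + 1) → M),
    A (DirectSum.of (fun n => ⨂[𝕜] (_ : Fin n), M) (n + 1) (tprod 𝕜 f)) =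
      DirectSum.of (fun n => ⨂[𝕜] (_ : Fin n), M) n
        (∑ k : Fin (n + 1), (q ^ (k : ℕ) * φ (f k)) • tprod 𝕜 (fun i : Fin n => f (k.succAbove i)))

def IsRightCreation (g : M) (R : FockSpace 𝕜 M →ₗ[𝕜] FockSpace 𝕜 M) : Prop :=
  ∀ (n : ℕ) (f : Fin n → M),
    R (DirectSum.of (fun n => ⨂[𝕜] (_ : Fin n), M) n (tprod 𝕜 f)) =
      DirectSum.of (fun n => ⨂[𝕜] (_ : Fin n), M) (n + 1) (tprod 𝕜 (Fin.snoc f g))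

variable {q : 𝕜} {φ : M → 𝕜} {g : M} {A R : FockSpace 𝕜 M →ₗ[𝕜] FockSpace 𝕜 M}

theorem commutator_apply_of_tprod (hA : IsQAnnihilation q φ A) (hR : IsRightCreation g R)
    (n : ℕ) (f : Fin n → M) :
    A (R (DirectSum.of (fun n => ⨂[𝕜] (_ : Fin n), M) n (tprod 𝕜 f)))
      - R (A (DirectSum.of (fun n => ⨂[𝕜] (_ : Fin n), M) n (tprod 𝕜 f))) =
      (q ^ n * φ g) • DirectSum.of (fun n => ⨂[𝕜] (_ : Fin n), M) n (tprod 𝕜 f) := by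
  cases n with
  | zero =>
    obtain rfl : f = fun i : Fin 0 => i.elim0 := funext fun i => i.elim0
    have hg : (Fin.snoc (fun i : Fin 0 => i.elim0) g : Fin 1 → M) 0 = g := Fin.snoc_last _ _
    rw [hR, hA.apply_vacuum, map_zero, sub_zero, hA.apply_tprod, Fin.sum_univ_one, hg,
      DirectSum.of_smul, Fin.val_zero]
    congr
    exact Subsingleton.elim _ _
  | succ m =>
    rw [hR, hA.apply_tprod, Fin.sum_univ_castSucc, hA.apply_tprod]
    simp only [Fin.snoc_comp_castSucc_succAbove, Fin.snoc_castSucc, Fin.snoc_last,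
      Fin.succAbove_last, Fin.val_last, Fin.val_castSucc, map_add, map_sum, map_smul,
      DirectSum.of_smul, hR m]
    exact add_sub_cancel_left _ _

theorem commutator_apply_of (hA : IsQAnnihilation q φ A) (hR : IsRightCreation g R)
    (n : ℕ) (x : ⨂[𝕜] (_ : Fin n), M) :
    A (R (DirectSum.of (fun n => ⨂[𝕜] (_ : Fin n), M) n x))
      - R (A (DirectSum.of (fun n => ⨂[𝕜] (_ : Fin n), M) n x)) =
      (q ^ n * φ g) • DirectSum.of (fun n => ⨂[𝕜] (_ : Fin n), M) n x := by
  have hext : (A ∘ₗ R - R ∘ₗ A) ∘ₗ DirectSum.lof 𝕜 ℕ (fun n => ⨂[𝕜] (_ : Fin n), M) n =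
      (q ^ n * φ g) • DirectSum.lof 𝕜 ℕ (fun n => ⨂[𝕜] (_ : Fin n), M) n :=
    PiTensorProduct.ext <| MultilinearMap.ext fun f => by
      simpa [DirectSum.lof_eq_of] using commutator_apply_of_tprod hA hR n f
  simpa [DirectSum.lof_eq_of] using LinearMap.congr_fun hext x

end FockSpace

theorem q_annihilation_right_creation_commutator_general
    (H : Type) [NormedAddCommGroup H] [InnerProductSpace ℂ H]
    (q : ℝ) (h g : H)
    (A R : (DirectSum ℕ (fun n => ⨂[ℂ] (_ : Fin n), H)) →ₗ[ℂ] (DirectSum ℕ (fun n => ⨂[ℂ] (_ : Fin n), H)))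
    (hA0 : A (DirectSum.of (fun n => ⨂[ℂ] (_ : Fin n), H) 0
        (tprod ℂ (fun i : Fin 0 => i.elim0))) = 0)
    (hA : ∀ (n : ℕ) (f : Fin (n + 1) → H),
      A (DirectSum.of (fun n => ⨂[ℂ] (_ : Fin n), H) (n + 1) (tprod ℂ f)) =
        DirectSum.of (fun n => ⨂[ℂ] (_ : Fin n), H) n
          (∑ k : Fin (n + 1),
            ((q : ℂ) ^ (k : ℕ) * (inner ℂ (f k) h : ℂ)) •
              tprod ℂ (fun i : Fin n => f (k.succAbove i))))
    (hR : ∀ (n : ℕ) (f : Fin n → H),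
      R (DirectSum.of (fun n => ⨂[ℂ] (_ : Fin n), H) n (tprod ℂ f)) =
        DirectSum.of (fun n => ⨂[ℂ] (_ : Fin n), H) (n + 1) (tprod ℂ (Fin.snoc f g))) :
    ∀ (n : ℕ) (x : ⨂[ℂ] (_ : Fin n), H),
      A (R (DirectSum.of (fun n => ⨂[ℂ] (_ : Fin n), H) n x))
        - R (A (DirectSum.of (fun n => ⨂[ℂ] (_ : Fin n), H) n x)) =
        ((q : ℂ) ^ n * (inner ℂ g h : ℂ)) •
          DirectSum.of (fun n => ⨂[ℂ] (_ : Fin n), H) n x :=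
  FockSpace.commutator_apply_of (φ := fun x => inner ℂ x h) ⟨hA0, hA⟩ hR

/-- On the algebraic full Fock space `F_alg(H) = ⊕_{n≥0} H^{⊗n}` (with `H^{⊗0} = ℂΩ`),
let `A = ℓ(h)*` be the `q`-deformed annihilation operator, determined by
`ℓ(h)* Ω = 0` and `ℓ(h)* (h₁⊗⋯⊗hₙ) = Σ_k q^{k-1} ⟨h_k, h⟩ h₁⊗⋯⊗ĥ_k⊗⋯⊗hₙ`,
and let `R = r(g)` be the right creation operator, `r(g)(h₁⊗⋯⊗hₙ) = h₁⊗⋯⊗hₙ⊗g`.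
Then for every `n ≥ 0` and every `ξ ∈ H^{⊗n}`, `[ℓ(h)*, r(g)] ξ = q^n ⟨g,h⟩ ξ`,
i.e. `[ℓ(h)*, r(g)] = ⟨g,h⟩ Σ_{n≥0} q^n P_n`. -/
theorem q_annihilation_right_creation_commutator
    (H : Type) [NormedAddCommGroup H] [InnerProductSpace ℂ H]
    (q : ℝ) (hq₁ : -1 < q) (hq₂ : q < 1) (h g : H)
    (A R : (DirectSum ℕ (fun n => ⨂[ℂ] (_ : Fin n), H)) →ₗ[ℂ] (DirectSum ℕ (fun n => ⨂[ℂ] (_ : Fin n), H)))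
    (hA0 : A (DirectSum.of (fun n => ⨂[ℂ] (_ : Fin n), H) 0
        (tprod ℂ (fun i : Fin 0 => i.elim0))) = 0)
    (hA : ∀ (n : ℕ) (f : Fin (n + 1) → H),
      A (DirectSum.of (fun n => ⨂[ℂ] (_ : Fin n), H) (n + 1) (tprod ℂ f)) =
        DirectSum.of (fun n => ⨂[ℂ] (_ : Fin n), H) n
          (∑ k : Fin (n + 1),
            ((q : ℂ) ^ (k : ℕ) * (inner ℂ (f k) h : ℂ)) •
              tprod ℂ (fun i : Fin n => f (k.succAbove i))))
    (hR : ∀ (n : ℕ) (f : Fin n → H),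
      R (DirectSum.of (fun n => ⨂[ℂ] (_ : Fin n), H) n (tprod ℂ f)) =
        DirectSum.of (fun n => ⨂[ℂ] (_ : Fin n), H) (n + 1) (tprod ℂ (Fin.snoc f g))) :
    ∀ (n : ℕ) (x : ⨂[ℂ] (_ : Fin n), H),
      A (R (DirectSum.of (fun n => ⨂[ℂ] (_ : Fin n), H) n x))
        - R (A (DirectSum.of (fun n => ⨂[ℂ] (_ : Fin n), H) n x)) =
        ((q : ℂ) ^ n * (inner ℂ g h : ℂ)) •
          DirectSum.of (fun n => ⨂[ℂ] (_ : Fin n), H) n x :=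
  q_annihilation_right_creation_commutator_general H q h g A R hA0 hA hR
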